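/- arXiv:2103.02283 — 3 statements merged into one kernel-verified Lean document; each statement's English description precedes it below -/
import Mathlib

section
/- For every even integer m ≥ 4 there exists a simple line arrangement L of m + 1 lines whose arrangement graph G_L has exactly m vertices of degree 2, exactly 2 vertices of degree 3, and exactly (m+1)(m−2)/2 − 1 vertices of degree 4 (obtained from a star construction on m + 1 lines by one pull operation). -/
/-- A line in the Euclidean plane `ℝ × ℝ`, given by an affine equation. -/
def IsLine (l : Set (ℝ × ℝ)) : Prop :=
  ∃ a b c : ℝ, (a, b) ≠ (0, 0) ∧ l = {p : ℝ × ℝ | a * p.1 + b * p.2 = c}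

/-- A simple line arrangement of `n` lines in the Euclidean plane: `n` distinct lines,
every two of which meet in exactly one point, and no point lies on three of the lines. -/
structure SimpleLineArrangement (n : ℕ) where
  lines : Finset (Set (ℝ × ℝ))
  card_lines : lines.card = n
  isLine : ∀ l ∈ lines, IsLine l
  meet : ∀ l₁ ∈ lines, ∀ l₂ ∈ lines, l₁ ≠ l₂ → ∃! p : ℝ × ℝ, p ∈ l₁ ∩ l₂
  simple : ∀ p : ℝ × ℝ, ∀ l₁ ∈ lines, ∀ l₂ ∈ lines, ∀ l₃ ∈ lines,
    p ∈ l₁ → p ∈ l₂ → p ∈ l₃ → l₁ = l₂ ∨ l₁ = l₃ ∨ l₂ = l₃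

namespace SimpleLineArrangement

variable {n : ℕ}

/-- The vertex set of the arrangement: all intersection points of pairs of lines. -/
def verts (A : SimpleLineArrangement n) : Set (ℝ × ℝ) :=
  {p | ∃ l₁ ∈ A.lines, ∃ l₂ ∈ A.lines, l₁ ≠ l₂ ∧ p ∈ l₁ ∧ p ∈ l₂}

/-- The arrangement graph: two distinct vertices are adjacent iff some line of the
arrangement contains both and no other vertex lies strictly between them on that line. -/
def graph (A : SimpleLineArrangement n) : SimpleGraph (ℝ × ℝ) where
  Adj u v := u ≠ v ∧ u ∈ A.verts ∧ v ∈ A.verts ∧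
    ∃ l ∈ A.lines, u ∈ l ∧ v ∈ l ∧ ∀ w ∈ A.verts, w ∈ l → ¬ Sbtw ℝ u w v
  symm := ⟨by
    rintro u v ⟨huv, hu, hv, l, hl, hul, hvl, hbet⟩
    exact ⟨huv.symm, hv, hu, l, hl, hvl, hul, fun w hw hwl hb => hbet w hw hwl hb.symm⟩⟩
  loopless := ⟨by rintro u ⟨h, -⟩; exact h rfl⟩

/-- The degree of a vertex in the arrangement graph. -/
noncomputable def deg (A : SimpleLineArrangement n) (v : ℝ × ℝ) : ℕ :=
  {w | A.graph.Adj v w}.ncard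

/-- The number of vertices of the arrangement graph having degree `i`. -/
noncomputable def degCount (A : SimpleLineArrangement n) (i : ℕ) : ℕ :=
  {v | v ∈ A.verts ∧ A.deg v = i}.ncard

/-- The eccentricity of a vertex: the maximum graph distance to a vertex. -/
noncomputable def ecc (A : SimpleLineArrangement n) (u : ℝ × ℝ) : ℕ :=
  sSup ((fun v => A.graph.dist u v) '' A.verts)

/-- The realization `R(L)`: the union of the closed segments joining adjacent vertices. -/
def realization (A : SimpleLineArrangement n) : Set (ℝ × ℝ) :=
  ⋃ (u : ℝ × ℝ) (v : ℝ × ℝ) (_ : A.graph.Adj u v), segment ℝ u v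

/-- A point lies on the outer face of the realization if it belongs to the closure of
the unbounded connected component of the complement of the realization. -/
def OnOuterFace (A : SimpleLineArrangement n) (p : ℝ × ℝ) : Prop :=
  ∃ q : ℝ × ℝ, q ∉ A.realization ∧
    ¬ Bornology.IsBounded (connectedComponentIn (A.realization)ᶜ q) ∧
    p ∈ closure (connectedComponentIn (A.realization)ᶜ q)

end SimpleLineArrangement

/-!
The arrangement consists of the tangents `x + a² y = a` to the hyperbola `4xy = 1` with
parameters `aᵢ = 4i - 2n + 3`, `i < n = m + 1`. No two of them are parallel, since all sums
`aᵢ + aⱼ` are `≡ 2 mod 4`, and no three tangents of a conic are concurrent. Tangents `i` and `j`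
meet at height `y = (aᵢ + aⱼ)⁻¹`, so the vertices on a line are ordered by `y`, and a vertex has
one neighbour on a line through it if it is the highest or lowest vertex of that line and two
otherwise. Since `a` is increasing, the highest and lowest vertices of line `i` are its meeting
points with explicit partner lines; counting the pairs `{i, j}` in which `j` is a partner of `i`
and `i` one of `j` gives `m` vertices of degree 2 and two of degree 3, and all others have
degree 4.
-/

open Finset Function
open scoped Classical

theorem card_filter_lt_and_forall_not_between {α : Type*} [LinearOrder α] (S : Finset α)
    (v : α) :
    #{w ∈ S | v < w ∧ ∀ u ∈ S, ¬(v < u ∧ u < w)} =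
      if ∀ u ∈ S, u ≤ v then 0 else 1 := by
  split_ifs with h
  · exact card_eq_zero.2 (filter_eq_empty_iff.2 fun w hw hvw => (h w hw).not_gt hvw.1)
  · simp only [not_forall, not_le, exists_prop] at h
    have hne : ({u ∈ S | v < u} : Finset α).Nonempty := by simpa [filter_nonempty_iff] using h
    set w := ({u ∈ S | v < u} : Finset α).min' hne
    have hw : w ∈ S ∧ v < w := mem_filter.1 (min'_mem _ hne)
    have hw_le : ∀ u ∈ S, v < u → w ≤ u :=
      fun u hu hvu => min'_le _ _ (mem_filter.2 ⟨hu, hvu⟩)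
    refine card_eq_one.2 ⟨w, eq_singleton_iff_unique_mem.2 ⟨?_, ?_⟩⟩
    · exact mem_filter.2 ⟨hw.1, hw.2, fun u hu ⟨hvu, huw⟩ => (hw_le u hu hvu).not_gt huw⟩
    · rintro x hx
      obtain ⟨hxS, hvx, hx_gap⟩ := mem_filter.1 hx
      exact ((hw_le x hxS hvx).antisymm (not_lt.1 fun hwx => hx_gap w hw.1 ⟨hw.2, hwx⟩)).symm

section LinearOrderedField

variable {R : Type*} [Field R] [LinearOrder R] [IsStrictOrderedRing R]

theorem sbtw_iff_lt_lt {x y z : R} : Sbtw R x y z ↔ x < y ∧ y < z ∨ z < y ∧ y < x := by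
  refine ⟨fun ⟨hw, hyx, hyz⟩ => ?_, ?_⟩
  · rcases le_total x z with hxz | hzx
    · obtain ⟨h₁, h₂⟩ := (wbtw_iff_of_le hxz).1 hw
      exact .inl ⟨h₁.lt_of_ne hyx.symm, h₂.lt_of_ne hyz⟩
    · obtain ⟨h₁, h₂⟩ := (wbtw_iff_of_le hzx).1 hw.symm
      exact .inr ⟨h₁.lt_of_ne hyz.symm, h₂.lt_of_ne hyx⟩
  · rintro (⟨h₁, h₂⟩ | ⟨h₁, h₂⟩)
    · exact .of_lt_of_lt h₁ h₂
    · exact (Sbtw.of_lt_of_lt h₁ h₂).symm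

def occupiedSides (S : Finset R) (v : R) : ℕ :=
  (if ∀ u ∈ S, u ≤ v then 0 else 1) + (if ∀ u ∈ S, v ≤ u then 0 else 1)

theorem card_filter_not_sbtw (S : Finset R) (v : R) :
    #{w ∈ S | w ≠ v ∧ ∀ u ∈ S, ¬Sbtw R v u w} = occupiedSides S v := by
  have hsplit : ({w ∈ S | w ≠ v ∧ ∀ u ∈ S, ¬Sbtw R v u w} : Finset R) =
      {w ∈ S | v < w ∧ ∀ u ∈ S, ¬(v < u ∧ u < w)} ∪
        {w ∈ S | w < v ∧ ∀ u ∈ S, ¬(u < v ∧ w < u)} := by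
    ext w
    simp only [mem_union, mem_filter, sbtw_iff_lt_lt]
    constructor
    · rintro ⟨hw, hwv, hgap⟩
      rcases hwv.lt_or_gt with hlt | hgt
      · exact .inr ⟨hw, hlt, fun u hu h => hgap u hu (.inr h.symm)⟩
      · exact .inl ⟨hw, hgt, fun u hu h => hgap u hu (.inl h)⟩
    · rintro (⟨hw, hvw, hgap⟩ | ⟨hw, hwv, hgap⟩)
      · refine ⟨hw, hvw.ne', fun u hu h => h.elim (hgap u hu) fun h' => ?_⟩
        exact (hvw.trans h'.1).not_gt h'.2
      · refine ⟨hw, hwv.ne, fun u hu h => h.elim (fun h' => ?_) fun h' => hgap u hu h'.symm⟩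
        exact (h'.1.trans h'.2).not_gt hwv
  have hdisj : Disjoint ({w ∈ S | v < w ∧ ∀ u ∈ S, ¬(v < u ∧ u < w)} : Finset R)
      {w ∈ S | w < v ∧ ∀ u ∈ S, ¬(u < v ∧ w < u)} :=
    disjoint_filter.2 fun w _ h₁ h₂ => h₁.1.not_gt h₂.1
  rw [hsplit, card_union_of_disjoint hdisj, card_filter_lt_and_forall_not_between,
    occupiedSides]
  congr 1
  -- the points below `v` are the points above `v` in `Rᵒᵈ`
  exact card_filter_lt_and_forall_not_between (α := Rᵒᵈ) S v

end LinearOrderedField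

section TangentLines

def tangentLine (a : ℝ) : Set (ℝ × ℝ) := {p | p.1 + a ^ 2 * p.2 = a}

noncomputable def tangentMeet (a b : ℝ) : ℝ × ℝ := (a * b / (a + b), (a + b)⁻¹)

variable {a b : ℝ}

theorem tangentMeet_comm (a b : ℝ) : tangentMeet a b = tangentMeet b a := by
  simp only [tangentMeet, mul_comm a b, add_comm a b]

theorem tangentMeet_mem_left (h : a + b ≠ 0) : tangentMeet a b ∈ tangentLine a := by
  simp only [tangentMeet, tangentLine, Set.mem_ofPred_eq]
  field_simp
  ring

theorem tangentMeet_mem_right (h : a + b ≠ 0) : tangentMeet a b ∈ tangentLine b :=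
  tangentMeet_comm a b ▸ tangentMeet_mem_left (by rwa [add_comm])

theorem eq_tangentMeet_of_mem (hab : a ≠ b) (h : a + b ≠ 0) {p : ℝ × ℝ}
    (ha : p ∈ tangentLine a) (hb : p ∈ tangentLine b) : p = tangentMeet a b := by
  simp only [tangentLine, Set.mem_ofPred_eq] at ha hb
  have hy : p.2 = (a + b)⁻¹ := by
    have : (a - b) * ((a + b) * p.2 - 1) = 0 := by linear_combination ha - hb
    exact eq_inv_of_mul_eq_one_right
      (by linarith [(mul_eq_zero.1 this).resolve_left (sub_ne_zero.2 hab)])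
  refine Prod.ext ?_ hy
  rw [hy] at ha
  simp only [tangentMeet]
  field_simp at ha ⊢
  linear_combination ha

theorem tangentLine_injective : Injective tangentLine := fun a b h => by
  have : (a, (0 : ℝ)) ∈ tangentLine a := by simp [tangentLine]
  rw [h] at this
  simpa [tangentLine] using this

theorem tangentMeet_injective (a : ℝ) : Injective (tangentMeet a) := fun b c h => by
  simpa [tangentMeet] using congrArg Prod.snd h

theorem eq_or_eq_of_tangentMeet_eq {c d : ℝ} (h : a + b ≠ 0)
    (he : tangentMeet a b = tangentMeet c d) : a = c ∧ b = d ∨ a = d ∧ b = c := by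
  simp only [tangentMeet, Prod.mk.injEq, inv_inj] at he
  obtain ⟨hprod, hsum⟩ := he
  rw [← hsum, div_left_inj' h] at hprod
  have : (a - c) * (a - d) = 0 := by linear_combination a * hsum - hprod
  rcases mul_eq_zero.1 this with hc | hd
  · exact .inl ⟨by linarith, by linarith⟩
  · exact .inr ⟨by linarith, by linarith⟩

theorem eq_of_mem_tangentLine_of_snd_eq {p q : ℝ × ℝ} (hp : p ∈ tangentLine a)
    (hq : q ∈ tangentLine a) (h : p.2 = q.2) : p = q := by
  simp only [tangentLine, Set.mem_ofPred_eq] at hp hq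
  exact Prod.ext (by rw [← h] at hq; linarith) h

theorem sbtw_iff_sbtw_snd_of_mem_tangentLine {p q r : ℝ × ℝ} (hp : p ∈ tangentLine a)
    (hq : q ∈ tangentLine a) (hr : r ∈ tangentLine a) :
    Sbtw ℝ p q r ↔ Sbtw ℝ p.2 q.2 r.2 := by
  let param : ℝ →ᵃ[ℝ] ℝ × ℝ := AffineMap.lineMap (a, 0) (a - a ^ 2, 1)
  have hparam : ∀ x ∈ tangentLine a, param x.2 = x := fun x hx =>
    eq_of_mem_tangentLine_of_snd_eq
      (by simp [param, tangentLine, AffineMap.lineMap_apply_module']; ring)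
      hx (by simp [param, AffineMap.lineMap_apply_module'])
  have hinj : Injective param := fun s t hst => by
    simpa [param, AffineMap.lineMap_apply_module'] using congrArg Prod.snd hst
  conv_lhs => rw [← hparam p hp, ← hparam q hq, ← hparam r hr]
  exact hinj.sbtw_map_iff

end TangentLines

section TangentArrangement

noncomputable def tangentArrangement (n : ℕ) (a : ℕ → ℝ) (ha : Injective a)
    (hs : ∀ i j, i ≠ j → a i + a j ≠ 0) : SimpleLineArrangement n where
  lines := (range n).image (tangentLine ∘ a)
  card_lines := by rw [card_image_of_injective _ (tangentLine_injective.comp ha), card_range]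
  isLine := by
    simp only [mem_image, mem_range, forall_exists_index, and_imp]
    rintro _ i - rfl
    exact ⟨1, a i ^ 2, a i, by simp, by simp [tangentLine]⟩
  meet := by
    simp only [mem_image, mem_range, forall_exists_index, and_imp]
    rintro _ i - rfl _ j - rfl hne
    have hij : i ≠ j := fun h => hne (h ▸ rfl)
    exact ⟨tangentMeet (a i) (a j),
      ⟨tangentMeet_mem_left (hs i j hij), tangentMeet_mem_right (hs i j hij)⟩,
      fun p hp => eq_tangentMeet_of_mem (ha.ne hij) (hs i j hij) hp.1 hp.2⟩
  simple := by
    simp only [mem_image, mem_range, forall_exists_index, and_imp]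
    rintro p _ i - rfl _ j - rfl _ k - rfl hpi hpj hpk
    rcases eq_or_ne i j with rfl | hij
    · exact .inl rfl
    rcases eq_or_ne i k with rfl | hik
    · exact .inr (.inl rfl)
    have hjk : j = k := ha <| tangentMeet_injective (a i) <|
      (eq_tangentMeet_of_mem (ha.ne hij) (hs i j hij) hpi hpj).symm.trans
        (eq_tangentMeet_of_mem (ha.ne hik) (hs i k hik) hpi hpk)
    exact .inr (.inr (hjk ▸ rfl))

noncomputable def lineVerts (n : ℕ) (a : ℕ → ℝ) (i : ℕ) : Finset (ℝ × ℝ) :=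
  ((range n).erase i).image fun j => tangentMeet (a i) (a j)

noncomputable def lineHeights (n : ℕ) (a : ℕ → ℝ) (i : ℕ) : Finset ℝ :=
  ((range n).erase i).image fun j => (a i + a j)⁻¹

noncomputable def lineNeighbours (n : ℕ) (a : ℕ → ℝ) (i : ℕ) (v : ℝ × ℝ) :
    Finset (ℝ × ℝ) :=
  {w ∈ lineVerts n a i | w ≠ v ∧ ∀ u ∈ lineVerts n a i, ¬Sbtw ℝ v u w}

variable {n : ℕ} {a : ℕ → ℝ}

theorem mem_tangentLine_of_mem_lineVerts (hs : ∀ i j, i ≠ j → a i + a j ≠ 0) {i : ℕ}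
    {w : ℝ × ℝ} (hw : w ∈ lineVerts n a i) :
    w ∈ tangentLine (a i) := by
  obtain ⟨j, hj, rfl⟩ := mem_image.1 hw
  exact tangentMeet_mem_left (hs i j (ne_of_mem_erase hj).symm)

theorem lineHeights_eq_image_snd (i : ℕ) :
    lineHeights n a i = (lineVerts n a i).image Prod.snd := by
  rw [lineVerts, image_image]
  rfl

theorem card_lineNeighbours (hs : ∀ i j, i ≠ j → a i + a j ≠ 0) {i : ℕ} {v : ℝ × ℝ}
    (hv : v ∈ tangentLine (a i)) :
    #(lineNeighbours n a i v) = occupiedSides (lineHeights n a i) v.2 := by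
  have hline : ∀ w ∈ lineVerts n a i, w ∈ tangentLine (a i) :=
    fun w => mem_tangentLine_of_mem_lineVerts hs
  rw [← card_filter_not_sbtw, lineHeights_eq_image_snd, filter_image,
    card_image_of_injOn fun w hw w' hw' =>
      eq_of_mem_tangentLine_of_snd_eq (hline w (mem_filter.1 hw).1) (hline w' (mem_filter.1 hw').1)]
  refine congrArg card (filter_congr fun w hw => ?_)
  simp only [forall_mem_image]
  refine and_congr ⟨fun h h' => h (eq_of_mem_tangentLine_of_snd_eq (hline w hw) hv h'),
    fun h h' => h (congrArg Prod.snd h')⟩ (forall₂_congr fun u hu => ?_)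
  rw [sbtw_iff_sbtw_snd_of_mem_tangentLine hv (hline u hu) (hline w hw)]

theorem eq_or_eq_of_tangentMeet_mem (ha : Injective a)
    (hs : ∀ i j, i ≠ j → a i + a j ≠ 0) {i j t : ℕ} (hij : i ≠ j)
    (ht : tangentMeet (a i) (a j) ∈ tangentLine (a t)) : t = i ∨ t = j := by
  by_contra! hne
  have hti := eq_tangentMeet_of_mem (ha.ne hne.1) (hs t i hne.1) ht
    (tangentMeet_mem_left (hs i j hij))
  have htj := eq_tangentMeet_of_mem (ha.ne hne.2) (hs t j hne.2) ht
    (tangentMeet_mem_right (hs i j hij))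
  exact hij (ha (tangentMeet_injective (a t) (hti.symm.trans htj)))

variable (ha : Injective a) (hs : ∀ i j, i ≠ j → a i + a j ≠ 0)

theorem mem_lines_tangentArrangement {l : Set (ℝ × ℝ)} :
    l ∈ (tangentArrangement n a ha hs).lines ↔ ∃ i < n, tangentLine (a i) = l := by
  simp [tangentArrangement]

theorem mem_verts_tangentArrangement {v : ℝ × ℝ} :
    v ∈ (tangentArrangement n a ha hs).verts ↔
      ∃ i < n, ∃ j < n, i ≠ j ∧ tangentMeet (a i) (a j) = v := by
  simp only [SimpleLineArrangement.verts, mem_lines_tangentArrangement, Set.mem_ofPred_eq]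
  constructor
  · rintro ⟨_, ⟨i, hi, rfl⟩, _, ⟨j, hj, rfl⟩, hne, hvi, hvj⟩
    have hij : i ≠ j := fun h => hne (h ▸ rfl)
    exact ⟨i, hi, j, hj, hij, (eq_tangentMeet_of_mem (ha.ne hij) (hs i j hij) hvi hvj).symm⟩
  · rintro ⟨i, hi, j, hj, hij, rfl⟩
    exact ⟨_, ⟨i, hi, rfl⟩, _, ⟨j, hj, rfl⟩, fun h => ha.ne hij (tangentLine_injective h),
      tangentMeet_mem_left (hs i j hij), tangentMeet_mem_right (hs i j hij)⟩

theorem mem_lineVerts_iff {i : ℕ} (hi : i < n) {w : ℝ × ℝ} :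
    w ∈ lineVerts n a i ↔
      w ∈ (tangentArrangement n a ha hs).verts ∧ w ∈ tangentLine (a i) := by
  refine ⟨fun hw => ⟨?_, mem_tangentLine_of_mem_lineVerts hs hw⟩, ?_⟩
  · obtain ⟨j, hj, rfl⟩ := mem_image.1 hw
    obtain ⟨hji, hj⟩ := mem_erase.1 hj
    exact (mem_verts_tangentArrangement ha hs).2 ⟨i, hi, j, mem_range.1 hj, hji.symm, rfl⟩
  · rintro ⟨hw, hwi⟩
    obtain ⟨j, hj, k, hk, hjk, rfl⟩ := (mem_verts_tangentArrangement ha hs).1 hw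
    have hline : ∀ l < n, tangentLine (a l) ∈ (tangentArrangement n a ha hs).lines :=
      fun l hl => (mem_lines_tangentArrangement ha hs).2 ⟨l, hl, rfl⟩
    rcases (tangentArrangement n a ha hs).simple _ _ (hline i hi) _ (hline j hj) _ (hline k hk)
      hwi (tangentMeet_mem_left (hs j k hjk)) (tangentMeet_mem_right (hs j k hjk))
      with hij | hik | hjk'
    · obtain rfl := ha (tangentLine_injective hij)
      exact mem_image.2 ⟨k, mem_erase.2 ⟨hjk.symm, mem_range.2 hk⟩, rfl⟩
    · obtain rfl := ha (tangentLine_injective hik)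
      exact mem_image.2 ⟨j, mem_erase.2 ⟨hjk, mem_range.2 hj⟩, tangentMeet_comm _ _⟩
    · exact absurd (ha (tangentLine_injective hjk')) hjk

theorem mem_lineNeighbours_iff {t : ℕ} (ht : t < n) {v w : ℝ × ℝ} :
    w ∈ lineNeighbours n a t v ↔ w ≠ v ∧ w ∈ (tangentArrangement n a ha hs).verts ∧
      w ∈ tangentLine (a t) ∧ ∀ u ∈ (tangentArrangement n a ha hs).verts,
        u ∈ tangentLine (a t) → ¬Sbtw ℝ v u w := by
  simp only [lineNeighbours, mem_filter, mem_lineVerts_iff ha hs ht, and_imp]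
  tauto

theorem graph_adj_tangentMeet_iff {i j : ℕ} (hi : i < n) (hj : j < n) (hij : i ≠ j)
    {w : ℝ × ℝ} :
    (tangentArrangement n a ha hs).graph.Adj (tangentMeet (a i) (a j)) w ↔
      w ∈ lineNeighbours n a i (tangentMeet (a i) (a j)) ∨
        w ∈ lineNeighbours n a j (tangentMeet (a i) (a j)) := by
  have hv : tangentMeet (a i) (a j) ∈ (tangentArrangement n a ha hs).verts :=
    (mem_verts_tangentArrangement ha hs).2 ⟨i, hi, j, hj, hij, rfl⟩
  constructor
  · rintro ⟨hvw, -, hw, l, hl, hvl, hwl, hgap⟩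
    obtain ⟨t, ht, rfl⟩ := (mem_lines_tangentArrangement ha hs).1 hl
    have hmem := (mem_lineNeighbours_iff ha hs ht).2 ⟨hvw.symm, hw, hwl, hgap⟩
    rcases eq_or_eq_of_tangentMeet_mem ha hs hij hvl with rfl | rfl
    exacts [.inl hmem, .inr hmem]
  · rintro (h | h)
    · obtain ⟨hwv, hw, hwl, hgap⟩ := (mem_lineNeighbours_iff ha hs hi).1 h
      exact ⟨hwv.symm, hv, hw, _, (mem_lines_tangentArrangement ha hs).2 ⟨i, hi, rfl⟩,
        tangentMeet_mem_left (hs i j hij), hwl, hgap⟩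
    · obtain ⟨hwv, hw, hwl, hgap⟩ := (mem_lineNeighbours_iff ha hs hj).1 h
      exact ⟨hwv.symm, hv, hw, _, (mem_lines_tangentArrangement ha hs).2 ⟨j, hj, rfl⟩,
        tangentMeet_mem_right (hs i j hij), hwl, hgap⟩

theorem deg_tangentMeet {i j : ℕ} (hi : i < n) (hj : j < n) (hij : i ≠ j) :
    (tangentArrangement n a ha hs).deg (tangentMeet (a i) (a j)) =
      occupiedSides (lineHeights n a i) (a i + a j)⁻¹ +
        occupiedSides (lineHeights n a j) (a j + a i)⁻¹ := by
  set v := tangentMeet (a i) (a j)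
  have hdisj : Disjoint (lineNeighbours n a i v) (lineNeighbours n a j v) :=
    disjoint_left.2 fun w hwi hwj => (mem_filter.1 hwi).2.1 <|
      eq_tangentMeet_of_mem (ha.ne hij) (hs i j hij)
        (mem_tangentLine_of_mem_lineVerts hs (mem_filter.1 hwi).1)
        (mem_tangentLine_of_mem_lineVerts hs (mem_filter.1 hwj).1)
  have hnbrs : {w | (tangentArrangement n a ha hs).graph.Adj v w} =
      ↑(lineNeighbours n a i v ∪ lineNeighbours n a j v) := by
    ext w
    simp only [Set.mem_ofPred_eq, coe_union, Set.mem_union, mem_coe,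
      graph_adj_tangentMeet_iff ha hs hi hj hij, v]
  rw [SimpleLineArrangement.deg, hnbrs, Set.ncard_coe_finset, card_union_of_disjoint hdisj,
    card_lineNeighbours hs (tangentMeet_mem_left (hs i j hij)),
    card_lineNeighbours hs (tangentMeet_mem_right (hs i j hij)), add_comm (a j)]
  rfl

end TangentArrangement

section LineHeights

variable {n : ℕ} {a : ℕ → ℝ}

theorem mem_lineHeights {i j : ℕ} (hj : j < n) (hji : j ≠ i) :
    (a i + a j)⁻¹ ∈ lineHeights n a i :=
  mem_image_of_mem _ (mem_erase.2 ⟨hji, mem_range.2 hj⟩)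

theorem forall_lineHeights_le_iff (ha : Injective a) {i j k : ℕ} (hj : j < n) (hji : j ≠ i)
    (hk : IsGreatest (lineHeights n a i : Set ℝ) (a i + a k)⁻¹) :
    (∀ u ∈ lineHeights n a i, u ≤ (a i + a j)⁻¹) ↔ j = k := by
  refine ⟨fun h => ha (add_left_cancel (a := a i) (inv_injective ?_)), fun h => h ▸ hk.2⟩
  exact IsGreatest.unique ⟨mem_lineHeights hj hji, fun u hu => h u hu⟩ hk

theorem forall_le_lineHeights_iff (ha : Injective a) {i j k : ℕ} (hj : j < n) (hji : j ≠ i)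
    (hk : IsLeast (lineHeights n a i : Set ℝ) (a i + a k)⁻¹) :
    (∀ u ∈ lineHeights n a i, (a i + a j)⁻¹ ≤ u) ↔ j = k := by
  refine ⟨fun h => ha (add_left_cancel (a := a i) (inv_injective ?_)), fun h => h ▸ hk.2⟩
  exact IsLeast.unique ⟨mem_lineHeights hj hji, fun u hu => h u hu⟩ hk

theorem occupiedSides_lineHeights (ha : Injective a) {i j k l : ℕ} (hj : j < n) (hji : j ≠ i)
    (hk : IsGreatest (lineHeights n a i : Set ℝ) (a i + a k)⁻¹)
    (hl : IsLeast (lineHeights n a i : Set ℝ) (a i + a l)⁻¹) (hkl : k ≠ l) :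
    occupiedSides (lineHeights n a i) (a i + a j)⁻¹ = if j = k ∨ j = l then 1 else 2 := by
  rw [occupiedSides, if_congr (forall_lineHeights_le_iff ha hj hji hk) rfl rfl,
    if_congr (forall_le_lineHeights_iff ha hj hji hl) rfl rfl]
  split_ifs <;> omega

end LineHeights

def tangency (n i : ℕ) : ℝ := 4 * i - 2 * n + 3

theorem tangency_strictMono (n : ℕ) : StrictMono (tangency n) := fun i j hij => by
  have : (i : ℝ) < j := Nat.cast_lt.2 hij
  simp only [tangency]
  linarith

theorem tangency_add_eq_intCast (n i j : ℕ) :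
    tangency n i + tangency n j = ((4 * (i + j) + 6 - 4 * n : ℤ) : ℝ) := by
  push_cast [tangency]
  ring

theorem tangency_add_ne_zero (n i j : ℕ) : tangency n i + tangency n j ≠ 0 := by
  rw [tangency_add_eq_intCast, Int.cast_ne_zero]
  omega

theorem tangency_add_pos_iff {n i j : ℕ} :
    0 < tangency n i + tangency n j ↔ n ≤ i + j + 1 := by
  rw [tangency_add_eq_intCast, Int.cast_pos]
  omega

theorem tangency_add_neg_iff {n i j : ℕ} :
    tangency n i + tangency n j < 0 ↔ i + j + 2 ≤ n := by
  rw [tangency_add_eq_intCast, Int.cast_lt_zero]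
  omega

noncomputable def hyperbolaArrangement (n : ℕ) : SimpleLineArrangement n :=
  tangentArrangement n (tangency n) (tangency_strictMono n).injective
    fun i j _ => tangency_add_ne_zero n i j

def topPartner (n i : ℕ) : ℕ := if 2 * i + 1 = n then i + 1 else n - 1 - i

def bottomPartner (n i : ℕ) : ℕ := if i = n - 1 then n - 2 else n - 2 - i

theorem isGreatest_lineHeights_topPartner {n i : ℕ} (hn : 3 ≤ n) (hi : i < n) :
    IsGreatest (lineHeights n (tangency n) i : Set ℝ)
      (tangency n i + tangency n (topPartner n i))⁻¹ := by
  have hpos : 0 < tangency n i + tangency n (topPartner n i) :=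
    tangency_add_pos_iff.2 (by unfold topPartner; split_ifs <;> omega)
  refine ⟨mem_lineHeights (by unfold topPartner; split_ifs <;> omega)
    (by unfold topPartner; split_ifs <;> omega), ?_⟩
  simp only [lineHeights, coe_image, mem_upperBounds, Set.forall_mem_image, coe_erase,
    coe_range, Set.mem_sdiff, Set.mem_Iio, Set.mem_singleton_iff, and_imp]
  intro l hl hli
  rcases (tangency_add_ne_zero n i l).lt_or_gt with hneg | hpos'
  · exact (inv_lt_zero.2 hneg).le.trans (inv_pos.2 hpos).le
  · refine inv_anti₀ hpos ((add_le_add_iff_left _).2 ((tangency_strictMono n).monotone ?_))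
    have := tangency_add_pos_iff.1 hpos'
    unfold topPartner
    split_ifs <;> omega

theorem isLeast_lineHeights_bottomPartner {n i : ℕ} (hodd : Odd n) (hn : 3 ≤ n) (hi : i < n) :
    IsLeast (lineHeights n (tangency n) i : Set ℝ)
      (tangency n i + tangency n (bottomPartner n i))⁻¹ := by
  obtain ⟨K, hK⟩ := hodd
  refine ⟨mem_lineHeights (by unfold bottomPartner; split_ifs <;> omega)
    (by unfold bottomPartner; split_ifs <;> omega), ?_⟩
  simp only [lineHeights, coe_image, mem_lowerBounds, Set.forall_mem_image, coe_erase,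
    coe_range, Set.mem_sdiff, Set.mem_Iio, Set.mem_singleton_iff, and_imp]
  intro l hl hli
  have hmono := (tangency_strictMono n).monotone
  rcases eq_or_ne i (n - 1) with rfl | hlast
  · have hpos : 0 < tangency n (n - 1) + tangency n l := tangency_add_pos_iff.2 (by omega)
    refine inv_anti₀ hpos ((add_le_add_iff_left _).2 (hmono ?_))
    unfold bottomPartner
    split_ifs <;> omega
  · have hneg : tangency n i + tangency n (bottomPartner n i) < 0 :=
      tangency_add_neg_iff.2 (by unfold bottomPartner; split_ifs <;> omega)
    rcases (tangency_add_ne_zero n i l).lt_or_gt with hneg' | hpos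
    · refine (inv_le_inv_of_neg hneg hneg').2 ((add_le_add_iff_left _).2 (hmono ?_))
      have := tangency_add_neg_iff.1 hneg'
      unfold bottomPartner
      split_ifs <;> omega
    · exact (inv_lt_zero.2 hneg).le.trans (inv_pos.2 hpos).le

section Counting

def lineDegree (n i j : ℕ) : ℕ := if j = topPartner n i ∨ j = bottomPartner n i then 1 else 2

def vertexDegree (n i j : ℕ) : ℕ := lineDegree n i j + lineDegree n j i

def indexPairs (n : ℕ) : Finset (ℕ × ℕ) := {p ∈ range n ×ˢ range n | p.1 < p.2}

variable {n : ℕ}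

theorem mem_verts_hyperbolaArrangement {v : ℝ × ℝ} :
    v ∈ (hyperbolaArrangement n).verts ↔
      ∃ i < n, ∃ j < n, i ≠ j ∧ tangentMeet (tangency n i) (tangency n j) = v :=
  mem_verts_tangentArrangement _ _

theorem topPartner_ne_bottomPartner (hodd : Odd n) (hn : 3 ≤ n) {i : ℕ} (hi : i < n) :
    topPartner n i ≠ bottomPartner n i := by
  obtain ⟨K, rfl⟩ := hodd
  unfold topPartner bottomPartner
  split_ifs <;> omega

theorem deg_hyperbolaArrangement (hodd : Odd n) (hn : 3 ≤ n) {i j : ℕ} (hi : i < n)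
    (hj : j < n) (hij : i ≠ j) :
    (hyperbolaArrangement n).deg (tangentMeet (tangency n i) (tangency n j)) =
      vertexDegree n i j := by
  have ht := (tangency_strictMono n).injective
  rw [hyperbolaArrangement, deg_tangentMeet _ _ hi hj hij,
    occupiedSides_lineHeights ht hj hij.symm (isGreatest_lineHeights_topPartner hn hi)
      (isLeast_lineHeights_bottomPartner hodd hn hi) (topPartner_ne_bottomPartner hodd hn hi),
    occupiedSides_lineHeights ht hi hij (isGreatest_lineHeights_topPartner hn hj)
      (isLeast_lineHeights_bottomPartner hodd hn hj) (topPartner_ne_bottomPartner hodd hn hj)]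
  rfl

theorem degCount_hyperbolaArrangement (hodd : Odd n) (hn : 3 ≤ n) (d : ℕ) :
    (hyperbolaArrangement n).degCount d = #{p ∈ indexPairs n | vertexDegree n p.1 p.2 = d} := by
  have hset : {v | v ∈ (hyperbolaArrangement n).verts ∧ (hyperbolaArrangement n).deg v = d} =
      ↑(({p ∈ indexPairs n | vertexDegree n p.1 p.2 = d} : Finset (ℕ × ℕ)).image
        fun p => tangentMeet (tangency n p.1) (tangency n p.2)) := by
    ext v
    simp only [Set.mem_ofPred_eq, coe_image, Set.mem_image, mem_coe, mem_filter, indexPairs,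
      mem_product, mem_range, Prod.exists, mem_verts_hyperbolaArrangement]
    constructor
    · rintro ⟨⟨i, hi, j, hj, hij, rfl⟩, rfl⟩
      rcases hij.lt_or_gt with h | h
      · refine ⟨i, j, ⟨⟨⟨hi, hj⟩, h⟩, ?_⟩, rfl⟩
        exact (deg_hyperbolaArrangement hodd hn hi hj hij).symm
      · refine ⟨j, i, ⟨⟨⟨hj, hi⟩, h⟩, ?_⟩, tangentMeet_comm _ _⟩
        rw [deg_hyperbolaArrangement hodd hn hi hj hij, vertexDegree, vertexDegree, add_comm]
    · rintro ⟨i, j, ⟨⟨⟨hi, hj⟩, h⟩, rfl⟩, rfl⟩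
      exact ⟨⟨i, hi, j, hj, h.ne, rfl⟩, deg_hyperbolaArrangement hodd hn hi hj h.ne⟩
  rw [SimpleLineArrangement.degCount, hset, Set.ncard_coe_finset]
  refine card_image_of_injOn fun p hp q hq he => ?_
  simp only [coe_filter, indexPairs, mem_filter, mem_product, mem_range, Set.mem_ofPred_eq]
    at hp hq
  have ht := (tangency_strictMono n).injective
  rcases eq_or_eq_of_tangentMeet_eq (tangency_add_ne_zero n p.1 p.2) he
    with ⟨h₁, h₂⟩ | ⟨h₁, h₂⟩
  · exact Prod.ext (ht h₁) (ht h₂)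
  · have := ht h₁
    have := ht h₂
    omega

variable {K : ℕ}

theorem card_vertexDegree_eq_two (hn : n = 2 * K + 1) (hK : 2 ≤ K) :
    #{p ∈ indexPairs n | vertexDegree n p.1 p.2 = 2} = 2 * K := by
  subst hn
  -- `k ↦ (k / 2, 2K - k / 2 - k % 2)` lists `(i, 2K - i)` and `(i, 2K - 1 - i)` for `i < K`
  have hset : ({p ∈ indexPairs (2 * K + 1) | vertexDegree (2 * K + 1) p.1 p.2 = 2} :
        Finset (ℕ × ℕ)) = (range (2 * K)).image fun k => (k / 2, 2 * K - k / 2 - k % 2) := by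
    ext ⟨i, j⟩
    simp only [indexPairs, mem_filter, mem_product, mem_range, mem_image, Prod.mk.injEq]
    simp only [vertexDegree, lineDegree, topPartner, bottomPartner]
    constructor
    · intro h
      refine ⟨2 * i + (2 * K - i - j), ?_, ?_, ?_⟩ <;> split_ifs at h <;> omega
    · rintro ⟨k, hk, rfl, rfl⟩
      split_ifs <;> omega
  rw [hset, card_image_of_injOn, card_range]
  intro k hk l hl h
  simp only [coe_range, Set.mem_Iio, Prod.mk.injEq] at hk hl h
  omega

theorem card_vertexDegree_eq_three (hn : n = 2 * K + 1) (hK : 2 ≤ K) :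
    #{p ∈ indexPairs n | vertexDegree n p.1 p.2 = 3} = 2 := by
  subst hn
  have hset : ({p ∈ indexPairs (2 * K + 1) | vertexDegree (2 * K + 1) p.1 p.2 = 3} :
        Finset (ℕ × ℕ)) = {(K, K + 1), (2 * K - 1, 2 * K)} := by
    ext ⟨i, j⟩
    simp only [indexPairs, mem_filter, mem_product, mem_range, mem_insert, mem_singleton,
      Prod.mk.injEq]
    simp only [vertexDegree, lineDegree, topPartner, bottomPartner]
    constructor
    · intro h
      split_ifs at h <;> omega
    · rintro (⟨rfl, rfl⟩ | ⟨rfl, rfl⟩) <;> split_ifs <;> omega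
  rw [hset, card_pair (by simp only [ne_eq, Prod.mk.injEq]; omega)]

theorem card_vertexDegree_eq_two_add_three_add_four :
    #{p ∈ indexPairs n | vertexDegree n p.1 p.2 = 2} +
      #{p ∈ indexPairs n | vertexDegree n p.1 p.2 = 3} +
        #{p ∈ indexPairs n | vertexDegree n p.1 p.2 = 4} = n.choose 2 := by
  have hrange : ∀ p ∈ indexPairs n, vertexDegree n p.1 p.2 ∈ ({2, 3, 4} : Finset ℕ) := by
    intro p _
    simp only [vertexDegree, lineDegree, mem_insert, mem_singleton]
    split_ifs <;> omega
  have htotal : #(indexPairs n) = n.choose 2 := by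
    simpa [indexPairs] using card_product_filter_lt (s := range n)
  rw [← htotal, card_eq_sum_card_fiberwise hrange, sum_insert (by decide), sum_insert (by decide),
    sum_singleton, add_assoc]

end Counting

theorem succ_choose_two_eq {m : ℕ} (hm : 2 ≤ m) :
    (m + 1).choose 2 = (m + 1) * (m - 2) / 2 + (m + 1) := by
  have h : (m + 1) * (m + 1 - 1) = (m + 1) * (m - 2) + 2 * (m + 1) := by
    rw [Nat.add_sub_cancel]
    zify [hm]
    ring
  rw [Nat.choose_two_right, h, Nat.add_mul_div_left _ _ two_pos]

theorem star_with_pull_construction_exists (m : ℕ) (hm : 4 ≤ m) (heven : Even m) :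
    ∃ A : SimpleLineArrangement (m + 1),
      A.degCount 2 = m ∧ A.degCount 3 = 2 ∧
      A.degCount 4 = (m + 1) * (m - 2) / 2 - 1 := by
  obtain ⟨K, hK⟩ := heven
  have hn : m + 1 = 2 * K + 1 := by omega
  have hcount := degCount_hyperbolaArrangement (n := m + 1) ⟨K, hn⟩ (by omega)
  have h₂ := card_vertexDegree_eq_two hn (by omega)
  have h₃ := card_vertexDegree_eq_three hn (by omega)
  have htotal := card_vertexDegree_eq_two_add_three_add_four (n := m + 1)
  rw [h₂, h₃, succ_choose_two_eq (by omega)] at htotal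
  refine ⟨hyperbolaArrangement (m + 1), ?_, ?_, ?_⟩ <;> rw [hcount]
  · omega
  · exact h₃
  · omega
end

section
/- Let L be a simple line arrangement of n ≥ 3 lines, let u, v be distinct vertices of G_L, and let P be a shortest u,v-path in G_L of length k. Then the set of lines of L containing at least one vertex of P has exactly k + 2 elements. -/
namespace AffineMap

variable {V P : Type*} [AddCommGroup V] [Module ℝ V] [AddTorsor V P]

theorem mul_neg_of_sbtw (f : P →ᵃ[ℝ] ℝ) {x w z : P} (h : Sbtw ℝ x w z) (hw : f w = 0)
    (hx : f x ≠ 0) : f x * f z < 0 := by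
  obtain ⟨⟨t, ⟨ht0, ht1⟩, rfl⟩, -⟩ := sbtw_iff_mem_image_Ioo_and_ne.mp h
  rw [apply_lineMap, lineMap_apply_ring] at hw
  have : t * (f x * f z) = -((1 - t) * (f x * f x)) := by linear_combination f x * hw
  nlinarith [mul_self_pos.mpr hx]

theorem exists_sbtw_eq_zero (f : P →ᵃ[ℝ] ℝ) {p q : P} (h : f p * f q < 0) :
    ∃ w, Sbtw ℝ p w q ∧ f w = 0 := by
  have hne : f p ≠ f q := fun he => by rw [he] at h; nlinarith [mul_self_nonneg (f q)]
  have hpq : f p - f q ≠ 0 := sub_ne_zero.mpr hne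
  have ht : f p / (f p - f q) ∈ Set.Ioo (0 : ℝ) 1 := by
    rcases mul_neg_iff.mp h with ⟨hp, hq⟩ | ⟨hp, hq⟩
    · exact ⟨div_pos hp (by linarith), (div_lt_one (by linarith)).mpr (by linarith)⟩
    · exact ⟨div_pos_of_neg_of_neg hp (by linarith),
        (div_lt_one_of_neg (by linarith)).mpr (by linarith)⟩
  refine ⟨lineMap p q (f p / (f p - f q)), sbtw_lineMap_iff.mpr ⟨fun he => hne (he ▸ rfl), ht⟩, ?_⟩
  rw [apply_lineMap, lineMap_apply_ring]
  field_simp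
  ring

end AffineMap

theorem IsLine.exists_affineMap {l : Set (ℝ × ℝ)} (hl : IsLine l) :
    ∃ f : ℝ × ℝ →ᵃ[ℝ] ℝ, ∀ p, p ∈ l ↔ f p = 0 := by
  obtain ⟨a, b, c, -, rfl⟩ := hl
  refine ⟨(a • LinearMap.fst ℝ ℝ ℝ + b • LinearMap.snd ℝ ℝ ℝ).toAffineMap - AffineMap.const ℝ _ c,
    fun p => ?_⟩
  simp [sub_eq_zero]

theorem IsLine.lineMap_mem {l : Set (ℝ × ℝ)} (hl : IsLine l) {p q : ℝ × ℝ} (hp : p ∈ l)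
    (hq : q ∈ l) (t : ℝ) : AffineMap.lineMap p q t ∈ l := by
  obtain ⟨f, hf⟩ := hl.exists_affineMap
  rw [hf, AffineMap.apply_lineMap, (hf p).mp hp, (hf q).mp hq, AffineMap.lineMap_same_apply]

theorem IsLine.mem_of_sbtw {l : Set (ℝ × ℝ)} (hl : IsLine l) {x w z : ℝ × ℝ} (h : Sbtw ℝ x w z)
    (hx : x ∈ l) (hz : z ∈ l) : w ∈ l := by
  obtain ⟨⟨t, -, rfl⟩, -⟩ := h
  exact hl.lineMap_mem hx hz t

namespace SimpleGraph.Walk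

variable {V : Type*} {G : SimpleGraph V} {u v w : V}

open Classical in
noncomputable def crossings (W : G.Walk u v) (s : Set V) : ℕ :=
  W.darts.countP fun d => Xor (d.fst ∈ s) (d.snd ∈ s)

theorem crossings_append (W₁ : G.Walk u v) (W₂ : G.Walk v w) (s : Set V) :
    (W₁.append W₂).crossings s = W₁.crossings s + W₂.crossings s := by
  simp only [crossings, darts_append, List.countP_append]

theorem one_le_crossings (W : G.Walk u v) {s : Set V} (h : Xor (u ∈ s) (v ∈ s)) :
    1 ≤ W.crossings s := by
  obtain ⟨d, hd, hds⟩ : ∃ d ∈ W.darts, Xor (d.fst ∈ s) (d.snd ∈ s) := by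
    rcases h with ⟨hu, hv⟩ | ⟨hv, hu⟩
    · obtain ⟨d, hd, h₁, h₂⟩ := W.exists_boundary_dart s hu hv
      exact ⟨d, hd, Or.inl ⟨h₁, h₂⟩⟩
    · obtain ⟨d, hd, h₁, h₂⟩ := W.exists_boundary_dart sᶜ hu (by simpa using hv)
      exact ⟨d, hd, Or.inr ⟨by simpa using h₂, h₁⟩⟩
  exact List.countP_pos_iff.mpr ⟨d, hd, by simpa using hds⟩

theorem two_le_crossings (W : G.Walk u v) {s : Set V} (hw : w ∈ W.support)
    (hu : Xor (u ∈ s) (w ∈ s)) (hv : Xor (w ∈ s) (v ∈ s)) : 2 ≤ W.crossings s := by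
  classical
  rw [← W.take_spec hw, crossings_append]
  have := (W.takeUntil w hw).one_le_crossings hu
  have := (W.dropUntil w hw).one_le_crossings hv
  omega

open Classical in
theorem sum_crossings_le (W : G.Walk u v) (S : Finset (Set V)) {k : ℕ}
    (hk : ∀ x y, G.Adj x y → (S.filter fun s => Xor (x ∈ s) (y ∈ s)).card ≤ k) :
    ∑ s ∈ S, W.crossings s ≤ k * W.length := by
  induction W with
  | nil => simp [crossings]
  | @cons x y z h W ih =>
    have hcons : ∀ s, (W.cons h).crossings s =
        (if Xor (x ∈ s) (y ∈ s) then 1 else 0) + W.crossings s := by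
      intro s
      simp only [crossings, darts_cons, List.countP_cons]
      split_ifs <;> simp_all [add_comm]
    simp only [hcons, Finset.sum_add_distrib, Finset.sum_boole, Nat.cast_id, length_cons]
    linarith [hk x y h]

end SimpleGraph.Walk

namespace SimpleLineArrangement

open SimpleGraph Walk

variable {n : ℕ} (A : SimpleLineArrangement n)

theorem eq_of_mem_of_mem {l₁ l₂ : Set (ℝ × ℝ)} (h₁ : l₁ ∈ A.lines) (h₂ : l₂ ∈ A.lines)
    {p q : ℝ × ℝ} (hpq : p ≠ q) (hp₁ : p ∈ l₁) (hq₁ : q ∈ l₁) (hp₂ : p ∈ l₂) (hq₂ : q ∈ l₂) :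
    l₁ = l₂ := by
  by_contra hne
  obtain ⟨x, -, hx⟩ := A.meet l₁ h₁ l₂ h₂ hne
  exact hpq ((hx p ⟨hp₁, hp₂⟩).trans (hx q ⟨hq₁, hq₂⟩).symm)

theorem exists_lines_through_eq_pair {x : ℝ × ℝ} (hx : x ∈ A.verts) {m : Set (ℝ × ℝ)}
    (hm : m ∈ A.lines) (hxm : x ∈ m) :
    ∃ L ∈ A.lines, L ≠ m ∧ x ∈ L ∧ {l | l ∈ A.lines ∧ x ∈ l} = {m, L} := by
  obtain ⟨l₁, h₁, l₂, h₂, hne, hx₁, hx₂⟩ := hx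
  have hthrough : ∀ l ∈ A.lines, x ∈ l → l = l₁ ∨ l = l₂ := fun l hl hxl => by
    rcases A.simple x l hl l₁ h₁ l₂ h₂ hxl hx₁ hx₂ with h | h | h
    exacts [Or.inl h, Or.inr h, absurd h hne]
  have hpair : {l | l ∈ A.lines ∧ x ∈ l} = {l₁, l₂} := by
    ext l
    refine ⟨fun ⟨hl, hxl⟩ => hthrough l hl hxl, ?_⟩
    rintro (rfl | rfl)
    exacts [⟨h₁, hx₁⟩, ⟨h₂, hx₂⟩]
  rcases hthrough m hm hxm with rfl | rfl
  · exact ⟨l₂, h₂, hne.symm, hx₂, hpair⟩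
  · exact ⟨l₁, h₁, hne, hx₁, hpair.trans (Set.pair_comm _ _)⟩

open Classical in
theorem card_filter_xor_le_two {p q : ℝ × ℝ} (hpq : A.graph.Adj p q) :
    (A.lines.filter fun g => Xor (p ∈ g) (q ∈ g)).card ≤ 2 := by
  obtain ⟨-, -, -, m, hm, hpm, hqm, -⟩ := hpq
  -- a line through exactly one endpoint is the second line through that endpoint
  have hone : ∀ a b, a ∈ m → b ∈ m →
      (A.lines.filter fun g => a ∈ g ∧ b ∉ g).card ≤ 1 := by
    intro a b ham hbm
    refine Finset.card_le_one.mpr fun g₁ hg₁ g₂ hg₂ => ?_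
    simp only [Finset.mem_filter] at hg₁ hg₂
    rcases A.simple a g₁ hg₁.1 g₂ hg₂.1 m hm hg₁.2.1 hg₂.2.1 ham with h | h | h
    · exact h
    · exact absurd (h ▸ hbm) hg₁.2.2
    · exact absurd (h ▸ hbm) hg₂.2.2
  calc (A.lines.filter fun g => Xor (p ∈ g) (q ∈ g)).card
      ≤ ((A.lines.filter fun g => p ∈ g ∧ q ∉ g) ∪
          A.lines.filter fun g => q ∈ g ∧ p ∉ g).card := by
        refine Finset.card_le_card fun g hg => ?_
        simp only [Finset.mem_filter, Finset.mem_union] at hg ⊢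
        rcases hg with ⟨hg, h | h⟩
        exacts [Or.inl ⟨hg, h⟩, Or.inr ⟨hg, h⟩]
    _ ≤ 1 + 1 :=
        (Finset.card_union_le _ _).trans (add_le_add (hone p q hpm hqm) (hone q p hqm hpm))

theorem not_adj_of_mul_neg {g : Set (ℝ × ℝ)} (hg : g ∈ A.lines) {f : ℝ × ℝ →ᵃ[ℝ] ℝ}
    (hf : ∀ p, p ∈ g ↔ f p = 0) {p q : ℝ × ℝ} (h : f p * f q < 0) : ¬ A.graph.Adj p q := by
  rintro ⟨-, -, -, m, hm, hpm, hqm, hbetween⟩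
  obtain ⟨w, hw, hfw⟩ := f.exists_sbtw_eq_zero h
  have hmg : m ≠ g := by
    rintro rfl
    rw [(hf p).mp hpm, zero_mul] at h
    exact h.false
  have hwm : w ∈ m := (A.isLine m hm).mem_of_sbtw hw hpm hqm
  exact hbetween w ⟨m, hm, g, hg, hmg, hwm, (hf w).mpr hfw⟩ hwm hw

theorem exists_mem_support_of_sbtw {x z : ℝ × ℝ} (W : A.graph.Walk x z) {g : Set (ℝ × ℝ)}
    (hg : g ∈ A.lines) {w : ℝ × ℝ} (hw : Sbtw ℝ x w z) (hwg : w ∈ g) (hxg : x ∉ g) :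
    ∃ v ∈ W.support, v ∈ g := by
  obtain ⟨f, hf⟩ := (A.isLine g hg).exists_affineMap
  have hfx : f x ≠ 0 := fun h => hxg ((hf x).mpr h)
  have hxz : f x * f z < 0 := f.mul_neg_of_sbtw hw ((hf w).mp hwg) hfx
  by_contra! hW
  obtain ⟨d, hd, hd₁, hd₂⟩ := W.exists_boundary_dart {p | 0 < f p * f x}
    (mul_self_pos.mpr hfx) (by simp only [Set.mem_ofPred_eq, not_lt]; nlinarith)
  have hfd : f d.snd ≠ 0 := fun h =>
    hW _ (W.dart_snd_mem_support_of_mem_darts hd) ((hf _).mpr h)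
  simp only [Set.mem_ofPred_eq, not_lt] at hd₁ hd₂
  refine A.not_adj_of_mul_neg hg hf ?_ d.adj
  have : f d.snd * f x < 0 := lt_of_le_of_ne hd₂ (mul_ne_zero hfd hfx)
  nlinarith [mul_self_pos.mpr hfx]


theorem verts_finite : A.verts.Finite := by
  refine ((A.lines.finite_toSet.prod A.lines.finite_toSet).biUnion
    (t := fun L => {p | L.1 ≠ L.2 ∧ p ∈ L.1 ∧ p ∈ L.2}) fun L hL => ?_).subset ?_
  · by_cases hne : L.1 = L.2
    · simp [hne]
    · obtain ⟨x, -, hx⟩ := A.meet L.1 hL.1 L.2 hL.2 hne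
      exact (Set.finite_singleton x).subset fun p hp => hx p ⟨hp.2.1, hp.2.2⟩
  · rintro p ⟨l₁, h₁, l₂, h₂, hne, hp₁, hp₂⟩
    exact Set.mem_biUnion (x := (l₁, l₂)) ⟨h₁, h₂⟩ ⟨hne, hp₁, hp₂⟩

def vertsBetween (x z : ℝ × ℝ) : Set (ℝ × ℝ) :=
  {w | w ∈ A.verts ∧ Sbtw ℝ x w z}

theorem vertsBetween_finite (x z : ℝ × ℝ) : (A.vertsBetween x z).Finite :=
  A.verts_finite.subset fun _ hw => hw.1

theorem exists_walk_length_le_ncard_vertsBetween {l : Set (ℝ × ℝ)} (hl : l ∈ A.lines)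
    {x z : ℝ × ℝ} (hx : x ∈ A.verts) (hz : z ∈ A.verts) (hxz : x ≠ z) (hxl : x ∈ l)
    (hzl : z ∈ l) : ∃ W : A.graph.Walk x z, W.length ≤ (A.vertsBetween x z).ncard + 1 := by
  induction hN : (A.vertsBetween x z).ncard using Nat.strong_induction_on generalizing x z with
  | _ N ih =>
  rcases (A.vertsBetween x z).eq_empty_or_nonempty with hB | ⟨w, hwB⟩
  · have hadj : A.graph.Adj x z :=
      ⟨hxz, hx, hz, l, hl, hxl, hzl, fun w hw _ hs => hB.subset ⟨hw, hs⟩⟩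
    exact ⟨hadj.toWalk, by simp⟩
  obtain ⟨hwv, hw⟩ := hwB
  have hwl : w ∈ l := (A.isLine l hl).mem_of_sbtw hw hxl hzl
  have hsub₁ : A.vertsBetween x w ⊆ A.vertsBetween x z \ {w} :=
    fun y ⟨hyv, hy⟩ => ⟨⟨hyv, hw.trans_left hy⟩, hy.ne_right⟩
  have hsub₂ : A.vertsBetween w z ⊆ A.vertsBetween x z \ {w} :=
    fun y ⟨hyv, hy⟩ => ⟨⟨hyv, hw.trans_right hy⟩, hy.ne_left⟩
  have hdisj : Disjoint (A.vertsBetween x w) (A.vertsBetween w z) :=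
    Set.disjoint_left.mpr fun y ⟨_, hy₁⟩ ⟨_, hy₂⟩ =>
      (hw.trans_left_right hy₁).not_swap_left hy₂.wbtw
  have hcard : (A.vertsBetween x w).ncard + (A.vertsBetween w z).ncard + 1 ≤ N := by
    rw [← Set.ncard_union_eq hdisj (A.vertsBetween_finite x w) (A.vertsBetween_finite w z), ← hN,
      ← Set.ncard_sdiff_singleton_add_one (show w ∈ A.vertsBetween x z from ⟨hwv, hw⟩)
        (A.vertsBetween_finite x z)]
    exact Nat.add_le_add_right (Set.ncard_le_ncard (Set.union_subset hsub₁ hsub₂)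
      ((A.vertsBetween_finite x z).subset Set.sdiff_subset)) 1
  obtain ⟨W₁, hW₁⟩ := ih _ (by omega) hx hwv hw.left_ne hxl hwl rfl
  obtain ⟨W₂, hW₂⟩ := ih _ (by omega) hwv hz hw.ne_right hwl hzl rfl
  exact ⟨W₁.append W₂, by rw [length_append]; omega⟩


theorem exists_injOn_lines_sbtw {l : Set (ℝ × ℝ)} (hl : l ∈ A.lines) {x z : ℝ × ℝ}
    (hxl : x ∈ l) (hzl : z ∈ l) :
    ∃ g : ℝ × ℝ → Set (ℝ × ℝ), Set.InjOn g (A.vertsBetween x z) ∧ ∀ v ∈ A.vertsBetween x z,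
      g v ∈ A.lines ∧ g v ≠ l ∧ v ∈ g v ∧ x ∉ g v ∧ z ∉ g v := by
  have hBl : ∀ v ∈ A.vertsBetween x z, v ∈ l := fun v hv =>
    (A.isLine l hl).mem_of_sbtw hv.2 hxl hzl
  have hother : ∀ v ∈ A.vertsBetween x z, ∃ g ∈ A.lines, g ≠ l ∧ v ∈ g := fun v hv => by
    obtain ⟨g, hg, hgl, hvg, -⟩ := A.exists_lines_through_eq_pair hv.1 hl (hBl v hv)
    exact ⟨g, hg, hgl, hvg⟩
  choose! g hg hgl hvg using hother
  refine ⟨g, fun v hv v' hv' hvv' => ?_, fun v hv => ⟨hg v hv, hgl v hv, hvg v hv, fun hx => ?_,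
    fun hz => ?_⟩⟩
  · by_contra hne
    exact hgl v hv (A.eq_of_mem_of_mem (hg v hv) hl hne (hvg v hv) (hvv' ▸ hvg v' hv')
      (hBl v hv) (hBl v' hv'))
  · exact hgl v hv (A.eq_of_mem_of_mem (hg v hv) hl hv.2.left_ne hx (hvg v hv) hxl (hBl v hv))
  · exact hgl v hv (A.eq_of_mem_of_mem (hg v hv) hl hv.2.ne_right (hvg v hv) hz (hBl v hv) hzl)

theorem ncard_vertsBetween_add_two_le_length {l : Set (ℝ × ℝ)} (hl : l ∈ A.lines)
    {x z : ℝ × ℝ} (hxz : x ≠ z) (hxl : x ∈ l) (hzl : z ∈ l) (W : A.graph.Walk x z)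
    {w : ℝ × ℝ} (hwW : w ∈ W.support) (hwl : w ∉ l) :
    (A.vertsBetween x z).ncard + 2 ≤ W.length := by
  classical
  have hx : x ∈ A.verts := (W.adj_snd fun h => hxz h.eq).2.1
  obtain ⟨h₀, hh₀, hh₀l, hxh₀, -⟩ := A.exists_lines_through_eq_pair hx hl hxl
  have hzh₀ : z ∉ h₀ := fun hz => hh₀l (A.eq_of_mem_of_mem hh₀ hl hxz hxh₀ hz hxl hzl)
  obtain ⟨g, hinj, hg⟩ := A.exists_injOn_lines_sbtw hl hxl hzl
  set B := A.vertsBetween x z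
  have hcross : ∀ v ∈ B, 2 ≤ W.crossings (g v) := fun v hv => by
    obtain ⟨hgv, -, hvg, hxg, hzg⟩ := hg v hv
    obtain ⟨c, hc, hcg⟩ := A.exists_mem_support_of_sbtw W hgv hv.2 hvg hxg
    exact W.two_le_crossings hc (Or.inr ⟨hcg, hxg⟩) (Or.inl ⟨hcg, hzg⟩)
  have hBfin := A.vertsBetween_finite x z
  have hT : insert l (insert h₀ (hBfin.toFinset.image g)) ⊆ A.lines := by
    simp only [Finset.insert_subset_iff, Finset.image_subset_iff, Set.Finite.mem_toFinset]
    exact ⟨hl, hh₀, fun v hv => (hg v hv).1⟩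
  have hlT : l ∉ insert h₀ (hBfin.toFinset.image g) := by
    simp only [Finset.mem_insert, Finset.mem_image, Set.Finite.mem_toFinset, not_or, not_exists]
    exact ⟨hh₀l.symm, fun v ⟨hv, hvl⟩ => (hg v hv).2.1 hvl⟩
  have hh₀T : h₀ ∉ hBfin.toFinset.image g := by
    simp only [Finset.mem_image, Set.Finite.mem_toFinset, not_exists]
    exact fun v ⟨hv, hvh₀⟩ => (hg v hv).2.2.2.1 (hvh₀ ▸ hxh₀)
  have hlower : 2 * B.ncard + 3 ≤ ∑ s ∈ A.lines, W.crossings s :=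
    calc 2 * B.ncard + 3 = 2 + 1 + ∑ v ∈ hBfin.toFinset, 2 := by
          rw [Finset.sum_const, smul_eq_mul, ← Set.ncard_eq_toFinset_card B hBfin]; ring
      _ ≤ W.crossings l + W.crossings h₀ + ∑ v ∈ hBfin.toFinset, W.crossings (g v) := by
          gcongr with v hv
          · exact W.two_le_crossings hwW (Or.inl ⟨hxl, hwl⟩) (Or.inr ⟨hzl, hwl⟩)
          · exact W.one_le_crossings (Or.inl ⟨hxh₀, hzh₀⟩)
          · exact hcross v (hBfin.mem_toFinset.mp hv)
      _ = ∑ s ∈ insert l (insert h₀ (hBfin.toFinset.image g)), W.crossings s := by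
          rw [Finset.sum_insert hlT, Finset.sum_insert hh₀T, Finset.sum_image fun v hv v' hv' =>
            hinj (hBfin.mem_toFinset.mp hv) (hBfin.mem_toFinset.mp hv'), add_assoc]
      _ ≤ ∑ s ∈ A.lines, W.crossings s := Finset.sum_le_sum_of_subset hT
  have hupper := W.sum_crossings_le A.lines fun _ _ => A.card_filter_xor_le_two
  omega

theorem mem_of_mem_support_of_length_eq_dist {l : Set (ℝ × ℝ)} (hl : l ∈ A.lines)
    {x z : ℝ × ℝ} (hxl : x ∈ l) (hzl : z ∈ l) (W : A.graph.Walk x z)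
    (hW : W.length = A.graph.dist x z) : ∀ w ∈ W.support, w ∈ l := by
  intro w hwW
  by_contra hwl
  have hxz : x ≠ z := by
    rintro rfl
    rw [dist_self, length_eq_zero_iff, nil_iff_support_eq] at hW
    rw [hW, List.mem_singleton] at hwW
    exact hwl (hwW ▸ hxl)
  have hnil : ¬ W.Nil := fun h => hxz h.eq
  obtain ⟨W', hW'⟩ := A.exists_walk_length_le_ncard_vertsBetween hl (W.adj_snd hnil).2.1
    (W.adj_penultimate hnil).2.2.1 hxz hxl hzl
  have := A.ncard_vertsBetween_add_two_le_length hl hxz hxl hzl W hwW hwl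
  have := dist_le W'
  omega


theorem ncard_lines_meeting_support {x b : ℝ × ℝ} (hx : x ∈ A.verts) (W : A.graph.Walk x b)
    (hW : W.length = A.graph.dist x b) :
    {l | l ∈ A.lines ∧ ∃ w ∈ W.support, w ∈ l}.ncard = W.length + 2 := by
  classical
  induction W with
  | nil =>
    obtain ⟨l, hl, -, -, -, hxl, -⟩ := id hx
    obtain ⟨L, -, hLl, -, hpair⟩ := A.exists_lines_through_eq_pair hx hl hxl
    simpa [hpair] using Set.ncard_pair hLl.symm
  | @cons x y b h W ih =>
    obtain ⟨hy, m, hm, hxm, hym, -⟩ := h.2.2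
    obtain ⟨L, hL, hLm, hxL, hpair⟩ := A.exists_lines_through_eq_pair hx hm hxm
    have hLW : ∀ w ∈ W.support, w ∉ L := by
      intro w hw hwL
      have hsub : (cons h (W.takeUntil w hw)).IsSubwalk (cons h W) :=
        ⟨nil, W.dropUntil w hw, by simp [take_spec]⟩
      have hyL := A.mem_of_mem_support_of_length_eq_dist hL hxL hwL _
        (length_eq_dist_of_subwalk hW hsub) y (by simp)
      exact hLm (A.eq_of_mem_of_mem hL hm h.ne hxL hyL hxm hym)
    have hset : {l | l ∈ A.lines ∧ ∃ w ∈ (cons h W).support, w ∈ l} =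
        insert L {l | l ∈ A.lines ∧ ∃ w ∈ W.support, w ∈ l} := by
      ext l
      simp only [support_cons, List.mem_cons, Set.mem_insert_iff, Set.mem_ofPred_eq]
      constructor
      · rintro ⟨hl, w, rfl | hw, hwl⟩
        · rcases (hpair.subset ⟨hl, hwl⟩ : l ∈ ({m, L} : Set _)) with rfl | rfl
          exacts [Or.inr ⟨hl, y, W.start_mem_support, hym⟩, Or.inl rfl]
        · exact Or.inr ⟨hl, w, hw, hwl⟩
      · rintro (rfl | ⟨hl, w, hw, hwl⟩)
        exacts [⟨hL, x, Or.inl rfl, hxL⟩, ⟨hl, w, Or.inr hw, hwl⟩]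
    have hLnot : L ∉ {l | l ∈ A.lines ∧ ∃ w ∈ W.support, w ∈ l} := fun ⟨_, w, hw, hwL⟩ =>
      hLW w hw hwL
    rw [hset, Set.ncard_insert_of_notMem hLnot (A.lines.finite_toSet.subset fun _ hl => hl.1),
      length_cons, ih hy (length_eq_dist_of_subwalk hW (isSubwalk_cons W h))]

end SimpleLineArrangement

theorem shortest_path_lines_count_general (n : ℕ) (A : SimpleLineArrangement n)
    (u v : ℝ × ℝ) (hu : u ∈ A.verts)
    (P : A.graph.Walk u v) (hlen : P.length = A.graph.dist u v) :
    {l | l ∈ A.lines ∧ ∃ w ∈ P.support, w ∈ l}.ncard = P.length + 2 :=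
  A.ncard_lines_meeting_support hu P hlen

theorem shortest_path_lines_count (n : ℕ) (hn : 3 ≤ n) (A : SimpleLineArrangement n)
    (u v : ℝ × ℝ) (hu : u ∈ A.verts) (hv : v ∈ A.verts) (huv : u ≠ v)
    (P : A.graph.Walk u v) (hP : P.IsPath) (hlen : P.length = A.graph.dist u v) :
    {l | l ∈ A.lines ∧ ∃ w ∈ P.support, w ∈ l}.ncard = P.length + 2 :=
  shortest_path_lines_count_general n A u v hu P hlen
end

section
/- Let L be a simple line arrangement of n ≥ 3 lines, let l ∈ L, and let u, v be the two extreme vertices on l, i.e., the two vertices of V(L) ∩ l such that every other vertex of V(L) ∩ l lies strictly between u and v on l. Then the graph distance satisfies d(u,v) = n − 2. -/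
/-!
The other `n - 1` lines meet `l` at most once each, so `l` carries at most `n - 1` vertices and
walking along `l` from `u` to `v` through consecutive vertices takes at most `n - 2` steps.

For the lower bound, let `c x` be the number of lines avoiding `v` that meet the segment
`[x, v]` (the card of `crossingLines v x`). If `x y` is an edge on a line `k` and a line `m` is
counted at `x` but not at `y`, then `m` passes through `x`: otherwise `m` separates `x` from `y`
and meets the open edge in a vertex. So `m` is the second line through `x`, and `c` drops by at
most one along each edge. Now `c v = 0`, while by extremality `c u` counts every line except
`l` and the second line through `v`, so every walk from `u` to `v` has length at least `n - 2`.
-/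

open SimpleGraph

section Betweenness

variable {R V P : Type*} [Field R] [LinearOrder R] [IsStrictOrderedRing R]
  [AddCommGroup V] [Module R V] [AddTorsor V P]

theorem Sbtw.not_sbtw_of_sbtw {x y w z : P} (hw : Sbtw R x w y) (hz : Sbtw R x z w) :
    ¬ Sbtw R w z y := fun h =>
  hz.ne_right ((wbtw_swap_left_iff R y).1 ⟨(hw.trans_left_right hz).wbtw, h.wbtw⟩)

variable {G : SimpleGraph P} {S : Set P}

theorem SimpleGraph.exists_walk_length_le_ncard_sbtw_add_one (hS : S.Finite)
    (hadj : ∀ x ∈ S, ∀ y ∈ S, x ≠ y → (∀ w ∈ S, ¬ Sbtw R x w y) → G.Adj x y)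
    {x y : P} (hx : x ∈ S) (hy : y ∈ S) :
    ∃ p : G.Walk x y, p.length ≤ {w ∈ S | Sbtw R x w y}.ncard + 1 := by
  induction h : {w ∈ S | Sbtw R x w y}.ncard using Nat.strong_induction_on
    generalizing x y with
  | _ k ih =>
    by_cases hmid : ∃ w ∈ S, Sbtw R x w y
    · obtain ⟨w, hwS, hw⟩ := hmid
      have hfin : ∀ a b : P, {z ∈ S | Sbtw R a z b}.Finite := fun a b =>
        hS.subset fun z hz => hz.1
      have hnotMem : w ∉ {z ∈ S | Sbtw R x z w} ∪ {z ∈ S | Sbtw R w z y} := by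
        rintro (⟨-, hz⟩ | ⟨-, hz⟩)
        · exact hz.ne_right rfl
        · exact hz.ne_left rfl
      have hsub : insert w ({z ∈ S | Sbtw R x z w} ∪ {z ∈ S | Sbtw R w z y}) ⊆
          {z ∈ S | Sbtw R x z y} := by
        rintro z (rfl | ⟨hzS, hz⟩ | ⟨hzS, hz⟩)
        · exact ⟨hwS, hw⟩
        · exact ⟨hzS, hw.trans_left hz⟩
        · exact ⟨hzS, hw.trans_right hz⟩
      have hdisj : Disjoint {z ∈ S | Sbtw R x z w} {z ∈ S | Sbtw R w z y} :=
        Set.disjoint_left.2 fun z hxw hwy => hw.not_sbtw_of_sbtw hxw.2 hwy.2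
      have hcard := Set.ncard_le_ncard hsub (hfin x y)
      rw [Set.ncard_insert_of_notMem hnotMem ((hfin x w).union (hfin w y)),
        Set.ncard_union_eq hdisj (hfin x w) (hfin w y), h] at hcard
      obtain ⟨p, hp⟩ := ih _ (by omega) hx hwS rfl
      obtain ⟨q, hq⟩ := ih _ (by omega) hwS hy rfl
      exact ⟨p.append q, by rw [Walk.length_append]; omega⟩
    · push Not at hmid
      by_cases hxy : x = y
      · subst hxy
        exact ⟨Walk.nil, by simp⟩
      · exact ⟨(hadj x hx y hy hxy hmid).toWalk, by simp⟩

theorem SimpleGraph.exists_walk_length_add_one_le_ncard (hS : S.Finite)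
    (hadj : ∀ x ∈ S, ∀ y ∈ S, x ≠ y → (∀ w ∈ S, ¬ Sbtw R x w y) → G.Adj x y)
    {x y : P} (hx : x ∈ S) (hy : y ∈ S) (hxy : x ≠ y) :
    ∃ p : G.Walk x y, p.length + 1 ≤ S.ncard := by
  obtain ⟨p, hp⟩ := exists_walk_length_le_ncard_sbtw_add_one hS hadj hx hy
  have hfin : {w ∈ S | Sbtw R x w y}.Finite := hS.subset fun z hz => hz.1
  have hsub : insert x (insert y {w ∈ S | Sbtw R x w y}) ⊆ S := by
    rintro z (rfl | rfl | ⟨hzS, -⟩)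
    exacts [hx, hy, hzS]
  have hcard := Set.ncard_le_ncard hsub hS
  rw [Set.ncard_insert_of_notMem (by rintro (h | ⟨-, h⟩); exacts [hxy h, h.left_ne rfl])
      (hfin.insert y),
    Set.ncard_insert_of_notMem (fun h => h.2.ne_right rfl) hfin] at hcard
  exact ⟨p, by omega⟩

end Betweenness

section AffineFunctional

variable {𝕜 E : Type*} [Field 𝕜] [LinearOrder 𝕜] [IsStrictOrderedRing 𝕜]
  [AddCommGroup E] [Module 𝕜 E]

theorem AffineMap.exists_mem_segment_eq_zero_iff (f : E →ᵃ[𝕜] 𝕜) (x y : E) :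
    (∃ z ∈ segment 𝕜 x y, f z = 0) ↔ f x * f y ≤ 0 := by
  rw [← Set.mem_image, image_segment, segment_eq_uIcc, Set.mem_uIcc, mul_nonpos_iff]
  tauto

theorem AffineMap.exists_sbtw_eq_zero_of_mul_neg (f : E →ᵃ[𝕜] 𝕜) {x y : E}
    (h : f x * f y < 0) : ∃ z, Sbtw 𝕜 x z y ∧ f z = 0 := by
  obtain ⟨z, hz, hfz⟩ := (f.exists_mem_segment_eq_zero_iff x y).2 h.le
  refine ⟨z, ⟨mem_segment_iff_wbtw.1 hz, ?_, ?_⟩, hfz⟩ <;> rintro rfl <;> simp [hfz] at h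

end AffineFunctional

theorem IsLine.exists_affineMap_s17 {l : Set (ℝ × ℝ)} (h : IsLine l) :
    ∃ f : ℝ × ℝ →ᵃ[ℝ] ℝ, l = f ⁻¹' {0} := by
  obtain ⟨a, b, c, -, rfl⟩ := h
  refine ⟨⟨fun p => a * p.1 + b * p.2 - c, a • LinearMap.fst ℝ ℝ ℝ + b • LinearMap.snd ℝ ℝ ℝ,
    fun p w => ?_⟩, ?_⟩
  · simp only [vadd_eq_add, Prod.fst_add, Prod.snd_add, LinearMap.add_apply,
      LinearMap.smul_apply, LinearMap.fst_apply, LinearMap.snd_apply, smul_eq_mul]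
    ring
  · ext p
    simp [sub_eq_zero]

theorem IsLine.convex {l : Set (ℝ × ℝ)} (h : IsLine l) : Convex ℝ l := by
  obtain ⟨f, rfl⟩ := h.exists_affineMap_s17
  exact (convex_singleton 0).affine_preimage f

namespace SimpleLineArrangement

variable {n : ℕ} (A : SimpleLineArrangement n) {l : Set (ℝ × ℝ)}

theorem exists_other_line_mem {x : ℝ × ℝ} (hx : x ∈ A.verts) (k : Set (ℝ × ℝ)) :
    ∃ m ∈ A.lines, m ≠ k ∧ x ∈ m := by
  obtain ⟨l₁, h₁, l₂, h₂, hne, hx₁, hx₂⟩ := hx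
  by_cases h : l₁ = k
  · exact ⟨l₂, h₂, h ▸ hne.symm, hx₂⟩
  · exact ⟨l₁, h₁, h, hx₁⟩

theorem exists_injOn_verts_inter (hl : l ∈ A.lines) :
    ∃ f : ℝ × ℝ → Set (ℝ × ℝ),
      Set.MapsTo f (A.verts ∩ l) ↑(A.lines.erase l) ∧ Set.InjOn f (A.verts ∩ l) := by
  have hex : ∀ x, ∃ m, x ∈ A.verts ∩ l → m ∈ A.lines ∧ m ≠ l ∧ x ∈ m := by
    intro x
    by_cases hx : x ∈ A.verts ∩ l
    · obtain ⟨m, hm, hml, hxm⟩ := A.exists_other_line_mem hx.1 l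
      exact ⟨m, fun _ => ⟨hm, hml, hxm⟩⟩
    · exact ⟨∅, fun h => absurd h hx⟩
  choose f hf using hex
  refine ⟨f, fun x hx => ?_, fun x hx y hy hxy => ?_⟩
  · obtain ⟨hm, hml, -⟩ := hf x hx
    exact Finset.mem_coe.2 (Finset.mem_erase.2 ⟨hml, hm⟩)
  · obtain ⟨hm, hml, hxm⟩ := hf x hx
    obtain ⟨-, -, hym⟩ := hf y hy
    exact (A.meet _ hm l hl hml).unique ⟨hxm, hx.2⟩ ⟨hxy ▸ hym, hy.2⟩

theorem finite_verts_inter (hl : l ∈ A.lines) : (A.verts ∩ l).Finite := by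
  obtain ⟨f, hmaps, hinj⟩ := A.exists_injOn_verts_inter hl
  exact Set.Finite.of_injOn hmaps hinj (Finset.finite_toSet _)

theorem ncard_verts_inter_le (hl : l ∈ A.lines) : (A.verts ∩ l).ncard ≤ n - 1 := by
  obtain ⟨f, hmaps, hinj⟩ := A.exists_injOn_verts_inter hl
  have h := Set.ncard_le_ncard_of_injOn f hmaps hinj (Finset.finite_toSet _)
  rwa [Set.ncard_coe_finset, Finset.card_erase_of_mem hl, A.card_lines] at h

theorem exists_walk_length_le_of_mem_line (hl : l ∈ A.lines) {x y : ℝ × ℝ}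
    (hx : x ∈ A.verts ∩ l) (hy : y ∈ A.verts ∩ l) (hxy : x ≠ y) :
    ∃ p : A.graph.Walk x y, p.length ≤ n - 2 := by
  obtain ⟨p, hp⟩ := exists_walk_length_add_one_le_ncard (G := A.graph) (A.finite_verts_inter hl)
    (fun a ha b hb hab hbet => ⟨hab, ha.1, hb.1, l, hl, ha.2, hb.2,
      fun w hw hwl => hbet w ⟨hw, hwl⟩⟩) hx hy hxy
  exact ⟨p, by have := A.ncard_verts_inter_le hl; omega⟩

open Classical in
noncomputable def crossingLines (v x : ℝ × ℝ) : Finset (Set (ℝ × ℝ)) :=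
  {m ∈ A.lines | v ∉ m ∧ (m ∩ segment ℝ x v).Nonempty}

theorem mem_crossingLines {v x : ℝ × ℝ} {m : Set (ℝ × ℝ)} :
    m ∈ A.crossingLines v x ↔ m ∈ A.lines ∧ v ∉ m ∧ (m ∩ segment ℝ x v).Nonempty := by
  classical
  simp [crossingLines]

theorem crossingLines_self (v : ℝ × ℝ) : A.crossingLines v v = ∅ := by
  ext m
  simp only [mem_crossingLines, segment_same, Set.inter_singleton_nonempty]
  tauto

theorem mem_of_mem_crossingLines_of_adj {v x y : ℝ × ℝ} {m : Set (ℝ × ℝ)}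
    (hxy : A.graph.Adj x y) (hmx : m ∈ A.crossingLines v x) (hmy : m ∉ A.crossingLines v y) :
    x ∈ m := by
  obtain ⟨-, -, -, k, hk, hxk, hyk, hbet⟩ := hxy
  obtain ⟨hm, hvm, z, hzm, hzx⟩ := (A.mem_crossingLines).1 hmx
  obtain ⟨f, rfl⟩ := (A.isLine m hm).exists_affineMap_s17
  by_contra hxm
  have hfv : f v ≠ 0 := hvm
  have hfx : f x ≠ 0 := hxm
  have hyv : 0 < f y * f v := by
    refine lt_of_not_ge fun hyv => hmy ((A.mem_crossingLines).2 ⟨hm, hvm, ?_⟩)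
    obtain ⟨z', hz', hfz'⟩ := (f.exists_mem_segment_eq_zero_iff y v).2 hyv
    exact ⟨z', hfz', hz'⟩
  have hxv : f x * f v < 0 :=
    lt_of_le_of_ne ((f.exists_mem_segment_eq_zero_iff x v).1 ⟨z, hzx, hzm⟩)
      (mul_ne_zero hfx hfv)
  obtain ⟨w, hw, hfw⟩ := f.exists_sbtw_eq_zero_of_mul_neg (x := x) (y := y)
    (by nlinarith [mul_neg_of_neg_of_pos hxv hyv, sq_nonneg (f v)])
  have hwk : w ∈ k := (A.isLine k hk).convex.segment_subset hxk hyk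
    (mem_segment_iff_wbtw.2 hw.wbtw)
  have hmk : f ⁻¹' {0} ≠ k := fun h => hxm (h ▸ hxk)
  exact hbet w ⟨_, hm, k, hk, hmk, hfw, hwk⟩ hwk hw

theorem card_crossingLines_le_of_adj (v : ℝ × ℝ) {x y : ℝ × ℝ} (hxy : A.graph.Adj x y) :
    (A.crossingLines v x).card ≤ (A.crossingLines v y).card + 1 := by
  obtain ⟨k, hk, hxk, hyk, -⟩ := hxy.2.2.2
  obtain ⟨m₀, hm₀, hm₀k, hxm₀⟩ := A.exists_other_line_mem hxy.2.1 k
  have hsub : A.crossingLines v x ⊆ insert m₀ (A.crossingLines v y) := by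
    intro m hmx
    by_cases hmy : m ∈ A.crossingLines v y
    · exact Finset.mem_insert_of_mem hmy
    have hxm := A.mem_of_mem_crossingLines_of_adj hxy hmx hmy
    obtain ⟨hm, hvm, -⟩ := (A.mem_crossingLines).1 hmx
    have hmk : m ≠ k := by
      rintro rfl
      exact hmy ((A.mem_crossingLines).2 ⟨hm, hvm, y, hyk, left_mem_segment ℝ y v⟩)
    rcases A.simple x m hm m₀ hm₀ k hk hxm hxm₀ hxk with h | h | h
    · rw [h]
      exact Finset.mem_insert_self m₀ _
    · exact absurd h hmk
    · exact absurd h hm₀k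
  exact (Finset.card_le_card hsub).trans (Finset.card_insert_le _ _)

theorem card_crossingLines_le_length {v x : ℝ × ℝ} (p : A.graph.Walk x v) :
    (A.crossingLines v x).card ≤ p.length := by
  induction p with
  | nil => simp [crossingLines_self]
  | cons h p ih =>
    rw [Walk.length_cons]
    exact (A.card_crossingLines_le_of_adj _ h).trans (Nat.add_le_add_right ih 1)

theorem card_crossingLines_of_extreme (hl : l ∈ A.lines) {u v : ℝ × ℝ}
    (hv : v ∈ A.verts ∩ l) (hext : ∀ w ∈ A.verts ∩ l, w ≠ u → w ≠ v → Sbtw ℝ u w v) :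
    (A.crossingLines v u).card = n - 2 := by
  obtain ⟨k, hk, hkl, hvk⟩ := A.exists_other_line_mem hv.1 l
  have hcross : A.crossingLines v u = (A.lines.erase l).erase k := by
    ext m
    rw [mem_crossingLines, Finset.mem_erase, Finset.mem_erase]
    constructor
    · rintro ⟨hm, hvm, -⟩
      exact ⟨fun h => hvm (h ▸ hvk), fun h => hvm (h ▸ hv.2), hm⟩
    · rintro ⟨hmk, hml, hm⟩
      have hvm : v ∉ m := fun hvm => by
        rcases A.simple v m hm l hl k hk hvm hv.2 hvk with h | h | h
        exacts [hml h, hmk h, hkl h.symm]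
      obtain ⟨p, ⟨hpm, hpl⟩, -⟩ := A.meet m hm l hl hml
      refine ⟨hm, hvm, p, hpm, ?_⟩
      by_cases hpu : p = u
      · exact hpu ▸ left_mem_segment ℝ u v
      · exact mem_segment_iff_wbtw.2
          (hext p ⟨⟨m, hm, l, hl, hml, hpm, hpl⟩, hpl⟩ hpu fun h => hvm (h ▸ hpm)).wbtw
  rw [hcross, Finset.card_erase_of_mem (Finset.mem_erase.2 ⟨hkl, hk⟩),
    Finset.card_erase_of_mem hl, A.card_lines]
  omega

end SimpleLineArrangement

theorem dist_of_extreme_vertices_on_line_general (n : ℕ)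
    (A : SimpleLineArrangement n) (l : Set (ℝ × ℝ)) (hl : l ∈ A.lines)
    (u v : ℝ × ℝ) (hu : u ∈ A.verts ∩ l) (hv : v ∈ A.verts ∩ l) (huv : u ≠ v)
    (hext : ∀ w ∈ A.verts ∩ l, w ≠ u → w ≠ v → Sbtw ℝ u w v) :
    A.graph.dist u v = n - 2 := by
  obtain ⟨p, hp⟩ := A.exists_walk_length_le_of_mem_line hl hu hv huv
  obtain ⟨q, hq⟩ := p.reachable.exists_walk_length_eq_dist
  have hlower := A.card_crossingLines_le_length q
  rw [A.card_crossingLines_of_extreme hl hv hext, hq] at hlower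
  exact le_antisymm ((dist_le p).trans hp) hlower

theorem dist_of_extreme_vertices_on_line (n : ℕ) (hn : 3 ≤ n)
    (A : SimpleLineArrangement n) (l : Set (ℝ × ℝ)) (hl : l ∈ A.lines)
    (u v : ℝ × ℝ) (hu : u ∈ A.verts ∩ l) (hv : v ∈ A.verts ∩ l) (huv : u ≠ v)
    (hext : ∀ w ∈ A.verts ∩ l, w ≠ u → w ≠ v → Sbtw ℝ u w v) :
    A.graph.dist u v = n - 2 :=
  dist_of_extreme_vertices_on_line_general n A l hl u v hu hv huv hext
end
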